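/- Let d ∈ {1,...,9} and let i be a positive integer whose decimal leading digit is NOT d, with k = min{m ∈ ℕ : d·10^m > i}. Then the number of integers in {1,...,i} whose decimal leading digit equals d is (10^k − 1)/9. -/

import Mathlib

/-!
The integers with leading digit `d` are the disjoint blocks `[d·10^m, (d+1)·10^m)` of size `10^m`.
Minimality of `k` gives `d·10^(k-1) ≤ i`, and since `i` does not start with `d`, in fact
`(d+1)·10^(k-1) ≤ i < d·10^k`: so `{1, …, i}` contains exactly the blocks with `m < k`, and the count
is `1 + 10 + ⋯ + 10^(k-1) = (10^k - 1)/9`.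
-/

open Finset

/-- The leading (first) decimal digit of a positive integer. -/
def leadingDigit (n : ℕ) : ℕ := n / 10 ^ (Nat.log 10 n)

/-- The number of integers in {1,...,i} whose decimal leading digit equals d. -/
def ldCount (d i : ℕ) : ℕ := ((Finset.Icc 1 i).filter (fun j => leadingDigit j = d)).card

/-- Probability that the leading digit is d when i is uniform on {1,...,n} and j uniform on {1,...,i}. -/
noncomputable def P (d n : ℕ) : ℝ := (1 / (n : ℝ)) * ∑ i ∈ Finset.Icc 1 n, (ldCount d i : ℝ) / i

/-- The `(m + 1)`-digit numbers with leading digit `d`. -/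
def digitBlock (d m : ℕ) : Finset ℕ := Ico (d * 10 ^ m) ((d + 1) * 10 ^ m)

lemma card_digitBlock (d m : ℕ) : #(digitBlock d m) = 10 ^ m := by
  rw [digitBlock, Nat.card_Ico, add_one_mul, Nat.add_sub_cancel_left]

section DigitBlock

variable {d : ℕ}

lemma log_ten_eq_of_mem_digitBlock (hd1 : 1 ≤ d) (hd9 : d ≤ 9) {j m : ℕ}
    (hj : j ∈ digitBlock d m) : Nat.log 10 j = m := by
  rw [digitBlock, mem_Ico] at hj
  apply Nat.log_eq_of_pow_le_of_lt_pow
  · calc 10 ^ m ≤ d * 10 ^ m := Nat.le_mul_of_pos_left _ hd1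
      _ ≤ j := hj.1
  · calc j < (d + 1) * 10 ^ m := hj.2
      _ ≤ 10 * 10 ^ m := Nat.mul_le_mul_right _ (by omega)
      _ = 10 ^ (m + 1) := (pow_succ' 10 m).symm

lemma leadingDigit_eq_iff_mem_digitBlock_log (j : ℕ) :
    leadingDigit j = d ↔ j ∈ digitBlock d (Nat.log 10 j) := by
  have hpos : 0 < 10 ^ Nat.log 10 j := by positivity
  rw [leadingDigit, Nat.div_eq_iff hpos, digitBlock, mem_Ico, add_one_mul]
  generalize 10 ^ Nat.log 10 j = p at hpos ⊢
  omega

lemma leadingDigit_eq_iff_exists_mem_digitBlock (hd1 : 1 ≤ d) (hd9 : d ≤ 9) (j : ℕ) :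
    leadingDigit j = d ↔ ∃ m, j ∈ digitBlock d m := by
  refine ⟨fun h => ⟨_, (leadingDigit_eq_iff_mem_digitBlock_log j).mp h⟩, ?_⟩
  rintro ⟨m, hj⟩
  rw [leadingDigit_eq_iff_mem_digitBlock_log, log_ten_eq_of_mem_digitBlock hd1 hd9 hj]
  exact hj

lemma pairwiseDisjoint_digitBlock (hd1 : 1 ≤ d) (hd9 : d ≤ 9) (s : Set ℕ) :
    s.PairwiseDisjoint (digitBlock d) := by
  have hsep : ∀ x y, x < y → (d + 1) * 10 ^ x ≤ d * 10 ^ y := fun x y hxy =>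
    calc (d + 1) * 10 ^ x ≤ 10 * 10 ^ x := Nat.mul_le_mul_right _ (by omega)
      _ = 10 ^ (x + 1) := (pow_succ' 10 x).symm
      _ ≤ 10 ^ y := Nat.pow_le_pow_right (by norm_num) hxy
      _ ≤ d * 10 ^ y := Nat.le_mul_of_pos_left _ hd1
  intro x _ y _ hxy
  simp only [Function.onFun, digitBlock]
  rcases hxy.lt_or_gt with h | h
  · exact Ico_disjoint_Ico_consecutive _ _ _ |>.mono_right (Ico_subset_Ico_left (hsep x y h))
  · exact (Ico_disjoint_Ico_consecutive _ _ _ |>.mono_right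
      (Ico_subset_Ico_left (hsep y x h))).symm

variable {i k : ℕ}

lemma succ_mul_pow_le_of_leadingDigit_ne (hd1 : 1 ≤ d) (hd9 : d ≤ 9)
    (hlead : leadingDigit i ≠ d) (hk : IsLeast {m : ℕ | d * 10 ^ m > i} k) {m : ℕ} (hm : m < k) :
    (d + 1) * 10 ^ m ≤ i := by
  have hprev : d * 10 ^ (k - 1) ≤ i := not_lt.mp fun h => by
    have := hk.2 h
    omega
  have hnext : (d + 1) * 10 ^ (k - 1) ≤ i := not_lt.mp fun h =>
    hlead <| (leadingDigit_eq_iff_exists_mem_digitBlock hd1 hd9 i).mpr ⟨k - 1, mem_Ico.mpr ⟨hprev, h⟩⟩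
  calc (d + 1) * 10 ^ m ≤ (d + 1) * 10 ^ (k - 1) :=
        Nat.mul_le_mul_left _ (Nat.pow_le_pow_right (by norm_num) (by omega))
    _ ≤ i := hnext

lemma filter_leadingDigit_eq_biUnion_digitBlock (hd1 : 1 ≤ d) (hd9 : d ≤ 9)
    (hlead : leadingDigit i ≠ d) (hk : IsLeast {m : ℕ | d * 10 ^ m > i} k) :
    (Icc 1 i).filter (fun j => leadingDigit j = d) = (range k).biUnion (digitBlock d) := by
  ext j
  simp only [mem_filter, mem_biUnion, mem_range, leadingDigit_eq_iff_exists_mem_digitBlock hd1 hd9]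
  constructor
  · rintro ⟨hji, m, hjm⟩
    have hlt : d * 10 ^ m < d * 10 ^ k :=
      (mem_Ico.mp hjm).1.trans_lt ((mem_Icc.mp hji).2.trans_lt hk.1)
    exact ⟨m, (Nat.pow_lt_pow_iff_right (by norm_num)).mp (Nat.lt_of_mul_lt_mul_left hlt), hjm⟩
  · rintro ⟨m, hm, hjm⟩
    have hupper := succ_mul_pow_le_of_leadingDigit_ne hd1 hd9 hlead hk hm
    have hpos : 0 < d * 10 ^ m := by positivity
    obtain ⟨hlo, hhi⟩ := mem_Ico.mp hjm
    exact ⟨mem_Icc.mpr ⟨by omega, by omega⟩, m, hjm⟩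

end DigitBlock

theorem ldCount_of_leading_ne (d i k : ℕ) (hd : d ∈ Finset.Icc 1 9)
    (hlead : leadingDigit i ≠ d)
    (hk : IsLeast {m : ℕ | d * 10 ^ m > i} k) :
    ldCount d i = (10 ^ k - 1) / 9 := by
  obtain ⟨hd1, hd9⟩ := mem_Icc.mp hd
  rw [ldCount, filter_leadingDigit_eq_biUnion_digitBlock hd1 hd9 hlead hk,
    card_biUnion (pairwiseDisjoint_digitBlock hd1 hd9 _)]
  simp only [card_digitBlock]
  exact Nat.geomSum_eq (by norm_num) k
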